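/- arXiv:2407.02816 — 2 statements merged into one kernel-verified Lean document; each statement's English description precedes it below -/
import Mathlib

section
/- For any thresholds (λ₁,λ₂) ∈ ℝ₊² and any tuple of generating distributions (P^{M₁},Q^{M₂}) ∈ 𝒫₀, the two-phase test φ^M of Algorithm 2 satisfies the non-asymptotic false alarm bound η(φ^M | P^{M₁},Q^{M₂}) ≤ ξ(M₂,N,n)·exp(−n·f₀(λ_{1,n}, P^{M₁}, Q^{M₂})), where ξ(M₂,N,n) := T·M₂·(N+1)^{M₂|𝒳|}·(n+1)^{M₂|𝒳|} with T := Σ_{K'∈[M₂]} T_{K'}, and f₀(λ₁,P^{M₁},Q^{M₂}) := min over all (i,j) ∈ [M₁]×[M₂] and over pairs of distributions (Ω,Ψ) with GJS(Ω,Ψ,α) ≤ λ₁ of (α·D(Ω‖P_i) + D(Ψ‖Q_j)). -/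
open scoped BigOperators
open scoped Classical

noncomputable section

/-! ### Distributions and divergences -/

/-- A probability mass function on a finite alphabet, as a predicate on real-valued
functions. -/
def IsDist {𝒳 : Type*} [Fintype 𝒳] (p : 𝒳 → ℝ) : Prop :=
  (∀ x, 0 ≤ p x) ∧ ∑ x, p x = 1

/-- A tuple of probability mass functions. -/
def IsDistVec {𝒳 : Type*} [Fintype 𝒳] {M : ℕ} (P : Fin M → 𝒳 → ℝ) : Prop :=
  ∀ i, IsDist (P i)

/-- Kullback–Leibler divergence `D(p‖q)`. -/
def KL {𝒳 : Type*} [Fintype 𝒳] (p q : 𝒳 → ℝ) : ℝ :=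
  ∑ x, p x * Real.log (p x / q x)

/-- The mixture `(α p + q)/(1+α)`. -/
def mix {𝒳 : Type*} (α : ℝ) (p q : 𝒳 → ℝ) : 𝒳 → ℝ :=
  fun x => (α * p x + q x) / (1 + α)

/-- Generalized Jensen–Shannon divergence `GJS(p, q, α)`. -/
def GJS {𝒳 : Type*} [Fintype 𝒳] (α : ℝ) (p q : 𝒳 → ℝ) : ℝ :=
  α * KL p (mix α p q) + KL q (mix α p q)

/-- Rényi divergence of order `γ`. -/
def Renyi {𝒳 : Type*} [Fintype 𝒳] (γ : ℝ) (p q : 𝒳 → ℝ) : ℝ :=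
  (γ - 1)⁻¹ * Real.log (∑ x, p x ^ γ * q x ^ (1 - γ))

/-! ### Matching hypotheses -/

/-- A `K`-matching hypothesis between a database of `M₁` sequences and one of `M₂`
sequences, represented by its set `ℳ` of matched pairs of indices: `K` pairs with
pairwise distinct first components and pairwise distinct second components. -/
structure Matching (M₁ M₂ K : ℕ) where
  pairs : Finset (Fin M₁ × Fin M₂)
  card_pairs : pairs.card = K
  left_inj : ∀ p ∈ pairs, ∀ q ∈ pairs, p.1 = q.1 → p = q
  right_inj : ∀ p ∈ pairs, ∀ q ∈ pairs, p.2 = q.2 → p = q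

namespace Matching

variable {M₁ M₂ K : ℕ}

theorem pairs_injective :
    Function.Injective (Matching.pairs : Matching M₁ M₂ K → Finset (Fin M₁ × Fin M₂)) := by
  rintro ⟨p, _, _, _⟩ ⟨q, _, _, _⟩ h
  simp only [Matching.mk.injEq]
  simpa using h

instance : Fintype (Matching M₁ M₂ K) :=
  Fintype.ofInjective Matching.pairs pairs_injective

/-- The set `𝒜_l` of matched indices in the first database. -/
def A (l : Matching M₁ M₂ K) : Finset (Fin M₁) := l.pairs.image Prod.fst

/-- The set `ℬ_l` of matched indices in the second database. -/
def B (l : Matching M₁ M₂ K) : Finset (Fin M₂) := l.pairs.image Prod.snd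

end Matching

/-- `T_K`, the number of `K`-matching hypotheses. -/
def TK (M₁ M₂ K : ℕ) : ℕ := M₁.choose K * M₂.choose K * K.factorial

/-- `T = Σ_{K ∈ [M₂]} T_K`. -/
def Tsum (M₁ M₂ : ℕ) : ℕ := ∑ K ∈ Finset.Icc 1 M₂, TK M₁ M₂ K

/-! ### Exponent functions -/

/-- `G_t(P^{M₁}, Q^{M₂}, α) = Σ_{(i,j) ∈ ℳ_t} GJS(P_i, Q_j, α)`. -/
def Gscore {𝒳 : Type*} [Fintype 𝒳] (α : ℝ) {M₁ M₂ K : ℕ} (t : Matching M₁ M₂ K)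
    (P : Fin M₁ → 𝒳 → ℝ) (Q : Fin M₂ → 𝒳 → ℝ) : ℝ :=
  ∑ p ∈ t.pairs, GJS α (P p.1) (Q p.2)

/-- `(P^{M₁}, Q^{M₂}) ∈ 𝒫_l^K`: tuples of distributions with `P_i = Q_j` iff
`(i,j) ∈ ℳ_l`. -/
def MemPK {𝒳 : Type*} [Fintype 𝒳] {M₁ M₂ K : ℕ} (l : Matching M₁ M₂ K)
    (P : Fin M₁ → 𝒳 → ℝ) (Q : Fin M₂ → 𝒳 → ℝ) : Prop :=
  IsDistVec P ∧ IsDistVec Q ∧ ∀ i j, P i = Q j ↔ (i, j) ∈ l.pairs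

/-- `(P^{M₁}, Q^{M₂}) ∈ 𝒫₀`: no matched pair at all. -/
def MemP0 {𝒳 : Type*} [Fintype 𝒳] {M₁ M₂ : ℕ}
    (P : Fin M₁ → 𝒳 → ℝ) (Q : Fin M₂ → 𝒳 → ℝ) : Prop :=
  IsDistVec P ∧ IsDistVec Q ∧ ∀ i j, P i ≠ Q j

/-- `E_l(P^{M₁},Q^{M₂},Ω^{M₁},Ψ^{M₂},α)`; the middle sum
`Σ_{j ∈ ℬ_l} D(Ψ_j ‖ P_{σ_l⁻¹(j)})` is written as the (equivalent) sum over the matched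
pairs of `l`. -/
def Escore {𝒳 : Type*} [Fintype 𝒳] [DecidableEq 𝒳] (α : ℝ) {M₁ M₂ K : ℕ}
    (l : Matching M₁ M₂ K) (P : Fin M₁ → 𝒳 → ℝ) (Q : Fin M₂ → 𝒳 → ℝ)
    (Ω : Fin M₁ → 𝒳 → ℝ) (Ψ : Fin M₂ → 𝒳 → ℝ) : ℝ :=
  (∑ i, α * KL (Ω i) (P i))
    + (∑ p ∈ l.pairs, KL (Ψ p.2) (P p.1))
    + ∑ j ∈ l.Bᶜ, KL (Ψ j) (Q j)

/-- The false-reject exponent function `F_l(P^{M₁},Q^{M₂},α,λ,K)`. -/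
def Fexp {𝒳 : Type*} [Fintype 𝒳] [DecidableEq 𝒳] (α lam : ℝ) {M₁ M₂ K : ℕ}
    (l : Matching M₁ M₂ K) (P : Fin M₁ → 𝒳 → ℝ) (Q : Fin M₂ → 𝒳 → ℝ) : ℝ :=
  sInf { e : ℝ | ∃ t s : Matching M₁ M₂ K, t ≠ s ∧
    ∃ (Ω : Fin M₁ → 𝒳 → ℝ) (Ψ : Fin M₂ → 𝒳 → ℝ),
      IsDistVec Ω ∧ IsDistVec Ψ ∧
      Gscore α t Ω Ψ ≤ lam ∧ Gscore α s Ω Ψ ≤ lam ∧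
      e = Escore α l P Q Ω Ψ }

/-- `Λ_l(P^{M₁},Q^{M₂},K,α) = min_{t ≠ l} G_t(P^{M₁},Q^{M₂},α)`. -/
def Lambda {𝒳 : Type*} [Fintype 𝒳] (α : ℝ) {M₁ M₂ K : ℕ} (l : Matching M₁ M₂ K)
    (P : Fin M₁ → 𝒳 → ℝ) (Q : Fin M₂ → 𝒳 → ℝ) : ℝ :=
  sInf { v : ℝ | ∃ t : Matching M₁ M₂ K, t ≠ l ∧ v = Gscore α t P Q }

/-- `f_j^{l,t,s}(P^{M₁},α)`; the term `D(Ψ‖P_{σ_l⁻¹(j)})` is written as the (equivalent)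
sum over the unique `i` with `(i,j) ∈ ℳ_l`. -/
def fsmall {𝒳 : Type*} [Fintype 𝒳] (α : ℝ) {M₁ M₂ K : ℕ} (l t s : Matching M₁ M₂ K)
    (P : Fin M₁ → 𝒳 → ℝ) (j : Fin M₂) : ℝ :=
  sInf { v : ℝ | ∃ Ψ : 𝒳 → ℝ, IsDist Ψ ∧
    v = (∑ i ∈ Finset.univ.filter (fun i => (i, j) ∈ l.pairs), KL Ψ (P i))
      + ∑ i ∈ Finset.univ.filter (fun i => (i, j) ∈ t.pairs ∨ (i, j) ∈ s.pairs),
          α * KL Ψ (P i) }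

/-- `g_j^{l,t,s}(P^{M₁},Q^{M₂},α)`. -/
def gsmall {𝒳 : Type*} [Fintype 𝒳] (α : ℝ) {M₁ M₂ K : ℕ} (t s : Matching M₁ M₂ K)
    (P : Fin M₁ → 𝒳 → ℝ) (Q : Fin M₂ → 𝒳 → ℝ) (j : Fin M₂) : ℝ :=
  sInf { v : ℝ | ∃ Ψ : 𝒳 → ℝ, IsDist Ψ ∧
    v = KL Ψ (Q j)
      + ∑ i ∈ Finset.univ.filter (fun i => (i, j) ∈ t.pairs ∨ (i, j) ∈ s.pairs),
          α * KL Ψ (P i) }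

/-- `Υ_l(P^{M₁},Q^{M₂},K,α)`. -/
def Upsilon {𝒳 : Type*} [Fintype 𝒳] (α : ℝ) {M₁ M₂ K : ℕ} (l : Matching M₁ M₂ K)
    (P : Fin M₁ → 𝒳 → ℝ) (Q : Fin M₂ → 𝒳 → ℝ) : ℝ :=
  sInf { v : ℝ | ∃ t s : Matching M₁ M₂ K, t ≠ s ∧
    v = (∑ j ∈ l.B ∩ (t.B ∪ s.B), fsmall α l t s P j)
      + ∑ j ∈ (t.B ∪ s.B) \ l.B, gsmall α t s P Q j }

/-- `f_{l,K}(λ₁, P^{M₁}, Q^{M₂})`, with values in the extended reals (it equals `⊤` when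
the feasible set is empty, e.g. when `K = M₂`). -/
def flK {𝒳 : Type*} [Fintype 𝒳] (α lam : ℝ) {M₁ M₂ K : ℕ} (l : Matching M₁ M₂ K)
    (P : Fin M₁ → 𝒳 → ℝ) (Q : Fin M₂ → 𝒳 → ℝ) : EReal :=
  sInf { v : EReal | ∃ (i : Fin M₁) (j : Fin M₂), i ∉ l.A ∧ j ∉ l.B ∧
    ∃ Ω Ψ : 𝒳 → ℝ, IsDist Ω ∧ IsDist Ψ ∧ GJS α Ω Ψ ≤ lam ∧
      v = ((α * KL Ω (P i) + KL Ψ (Q j) : ℝ) : EReal) }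

/-- `G_min^{l,K}(P^{M₁},Q^{M₂},α)`. -/
def Gmin {𝒳 : Type*} [Fintype 𝒳] (α : ℝ) {M₁ M₂ K : ℕ} (l : Matching M₁ M₂ K)
    (P : Fin M₁ → 𝒳 → ℝ) (Q : Fin M₂ → 𝒳 → ℝ) : ℝ :=
  sInf { v : ℝ | ∃ (i : Fin M₁) (j : Fin M₂), i ∉ l.A ∧ j ∉ l.B ∧
    v = GJS α (P i) (Q j) }

/-- `f₀(λ₁, P^{M₁}, Q^{M₂})`. -/
def f0 {𝒳 : Type*} [Fintype 𝒳] (α lam : ℝ) {M₁ M₂ : ℕ}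
    (P : Fin M₁ → 𝒳 → ℝ) (Q : Fin M₂ → 𝒳 → ℝ) : ℝ :=
  sInf { v : ℝ | ∃ (i : Fin M₁) (j : Fin M₂), ∃ Ω Ψ : 𝒳 → ℝ,
    IsDist Ω ∧ IsDist Ψ ∧ GJS α Ω Ψ ≤ lam ∧ v = α * KL Ω (P i) + KL Ψ (Q j) }

/-! ### Probabilistic setup -/

/-- Empirical distribution (type) of a sequence. -/
def empDist {𝒳 : Type*} [Fintype 𝒳] [DecidableEq 𝒳] {m : ℕ} (x : Fin m → 𝒳) : 𝒳 → ℝ :=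
  fun a => ((Finset.univ.filter fun k => x k = a).card : ℝ) / m

/-- The sample space: a pair of databases of sequences. -/
abbrev Sample (𝒳 : Type*) (M₁ M₂ N n : ℕ) : Type _ :=
  (Fin M₁ → Fin N → 𝒳) × (Fin M₂ → Fin n → 𝒳)

/-- The i.i.d. probability mass of an outcome: `X_i^N ∼ P_i^N`, `Y_j^n ∼ Q_j^n`, all
sequences independent. -/
def dens {𝒳 : Type*} {M₁ M₂ N n : ℕ} (P : Fin M₁ → 𝒳 → ℝ) (Q : Fin M₂ → 𝒳 → ℝ)
    (ω : Sample 𝒳 M₁ M₂ N n) : ℝ :=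
  (∏ i, ∏ k, P i (ω.1 i k)) * ∏ j, ∏ k, Q j (ω.2 j k)

/-- Probability of an event under the product distribution. -/
def Pr {𝒳 : Type*} [Fintype 𝒳] {M₁ M₂ N n : ℕ}
    (P : Fin M₁ → 𝒳 → ℝ) (Q : Fin M₂ → 𝒳 → ℝ) (S : Set (Sample 𝒳 M₁ M₂ N n)) : ℝ :=
  ∑ ω, S.indicator (dens P Q) ω

/-- The scoring function `S_t(𝐱^N, 𝐲^n) = G_t(T̂_{𝐱^N}, T̂_{𝐲^n}, α)`. -/
def Sscore {𝒳 : Type*} [Fintype 𝒳] [DecidableEq 𝒳] (α : ℝ) {M₁ M₂ K N n : ℕ}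
    (t : Matching M₁ M₂ K) (ω : Sample 𝒳 M₁ M₂ N n) : ℝ :=
  Gscore α t (fun i => empDist (ω.1 i)) (fun j => empDist (ω.2 j))

/-- The minimal score `S̲_K(𝐱,𝐲) = min_{t ∈ [T_K]} S_t(𝐱,𝐲)`. -/
def minScore {𝒳 : Type*} [Fintype 𝒳] [DecidableEq 𝒳] (α : ℝ) {M₁ M₂ N n : ℕ} (K : ℕ)
    (ω : Sample 𝒳 M₁ M₂ N n) : ℝ :=
  sInf { v : ℝ | ∃ t : Matching M₁ M₂ K, v = Sscore α t ω }

/-- The second-smallest score `h_K(𝐱,𝐲)` (computed as `min_{t ≠ s} max (S_t, S_s)`,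
which equals the second order statistic of the scores). -/
def hscore {𝒳 : Type*} [Fintype 𝒳] [DecidableEq 𝒳] (α : ℝ) {M₁ M₂ N n : ℕ} (K : ℕ)
    (ω : Sample 𝒳 M₁ M₂ N n) : ℝ :=
  sInf { v : ℝ | ∃ t s : Matching M₁ M₂ K, t ≠ s ∧
    v = max (Sscore α t ω) (Sscore α s ω) }

/-- The threshold `λ_n = λ + K |𝒳| log((1+α) n + 1) / n` (`c` is the alphabet size). -/
def unnTh (lam α : ℝ) (K c n : ℕ) : ℝ :=
  lam + ((K * c : ℕ) : ℝ) * Real.log ((1 + α) * n + 1) / n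

/-- Characterization of Unnikrishnan's test `φ^{U,K}` with threshold `lamn`:
it rejects exactly when the second-smallest score is `≤ lamn`, and otherwise outputs a
hypothesis achieving the minimal score. -/
def IsUnnTest {𝒳 : Type*} [Fintype 𝒳] [DecidableEq 𝒳] (α lamn : ℝ) {M₁ M₂ K N n : ℕ}
    (φ : Sample 𝒳 M₁ M₂ N n → Option (Matching M₁ M₂ K)) : Prop :=
  ∀ ω, (φ ω = none ↔ hscore α K ω ≤ lamn) ∧
    ∀ l : Matching M₁ M₂ K, φ ω = some l →
      ∀ t : Matching M₁ M₂ K, Sscore α l ω ≤ Sscore α t ω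

/-- Mismatch probability: a decision other than the true hypothesis or reject. -/
def mismatchProb {𝒳 : Type*} [Fintype 𝒳] {M₁ M₂ N n : ℕ} {D : Type*}
    (P : Fin M₁ → 𝒳 → ℝ) (Q : Fin M₂ → 𝒳 → ℝ)
    (hyp : D) (φ : Sample 𝒳 M₁ M₂ N n → Option D) : ℝ :=
  Pr P Q { ω | φ ω ≠ some hyp ∧ φ ω ≠ none }

/-- False reject probability. -/
def rejectProb {𝒳 : Type*} [Fintype 𝒳] {M₁ M₂ N n : ℕ} {D : Type*}
    (P : Fin M₁ → 𝒳 → ℝ) (Q : Fin M₂ → 𝒳 → ℝ)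
    (φ : Sample 𝒳 M₁ M₂ N n → Option D) : ℝ :=
  Pr P Q { ω | φ ω = none }

/-- False alarm probability. -/
def alarmProb {𝒳 : Type*} [Fintype 𝒳] {M₁ M₂ N n : ℕ} {D : Type*}
    (P : Fin M₁ → 𝒳 → ℝ) (Q : Fin M₂ → 𝒳 → ℝ)
    (φ : Sample 𝒳 M₁ M₂ N n → Option D) : ℝ :=
  Pr P Q { ω | φ ω ≠ none }

/-- Characterization of the two-phase test `φ^M` of Algorithm 2: if no candidate number
of matches `K̂ ∈ [M₂]` has minimal score below the first threshold, reject; otherwise,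
at the largest such `K̂`, behave as Unnikrishnan's test with the second threshold. -/
def IsTwoPhaseTest {𝒳 : Type*} [Fintype 𝒳] [DecidableEq 𝒳] (α lam₁ lam₂ : ℝ)
    {M₁ M₂ N n : ℕ}
    (φ : Sample 𝒳 M₁ M₂ N n → Option (Σ K : ℕ, Matching M₁ M₂ K)) : Prop :=
  ∀ ω : Sample 𝒳 M₁ M₂ N n,
    ((∀ Khat, 1 ≤ Khat → Khat ≤ M₂ →
        unnTh lam₁ α Khat (Fintype.card 𝒳) n < minScore α Khat ω) → φ ω = none) ∧
    ∀ Khat, 1 ≤ Khat → Khat ≤ M₂ →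
      minScore α Khat ω ≤ unnTh lam₁ α Khat (Fintype.card 𝒳) n →
      (∀ K', Khat < K' → K' ≤ M₂ →
        unnTh lam₁ α K' (Fintype.card 𝒳) n < minScore α K' ω) →
      ((φ ω = none ↔ hscore α Khat ω ≤ unnTh lam₂ α Khat (Fintype.card 𝒳) n) ∧
        ∀ d : Σ K : ℕ, Matching M₁ M₂ K, φ ω = some d →
          d.1 = Khat ∧ ∀ t : Matching M₁ M₂ d.1, Sscore α d.2 ω ≤ Sscore α t ω)

/-- `ξ(M₂, N, n) = T · M₂ · (N+1)^{M₂ c} (n+1)^{M₂ c}` where `c` is the alphabet size. -/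
def xiFactor (M₁ M₂ c N n : ℕ) : ℝ :=
  ((Tsum M₁ M₂ * M₂ : ℕ) : ℝ) * (N + 1 : ℝ) ^ (M₂ * c) * (n + 1 : ℝ) ^ (M₂ * c)

/-- A test obtained by composing with the empirical distributions (a type-based test). -/
def typeCompose {𝒳 : Type*} [Fintype 𝒳] [DecidableEq 𝒳] {M₁ M₂ N n : ℕ} {D : Type*}
    (g : ((Fin M₁ → 𝒳 → ℝ) × (Fin M₂ → 𝒳 → ℝ)) → Option D) :
    Sample 𝒳 M₁ M₂ N n → Option D :=
  fun ω => g (fun i => empDist (ω.1 i), fun j => empDist (ω.2 j))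

/-! ### Small deviations machinery -/

/-- Covariance of `f(X)` and `g(X)` for `X ∼ p`. -/
def covUnder {𝒳 : Type*} [Fintype 𝒳] (p f g : 𝒳 → ℝ) : ℝ :=
  (∑ x, p x * (f x * g x)) - (∑ x, p x * f x) * (∑ x, p x * g x)

/-- Information density `ı₁(x | P, Q, α)`. -/
def idens1 {𝒳 : Type*} (α : ℝ) (p q : 𝒳 → ℝ) (x : 𝒳) : ℝ :=
  Real.log ((1 + α) * p x / (α * p x + q x))

/-- Information density `ı₂(x | P, Q, α)`. -/
def idens2 {𝒳 : Type*} (α : ℝ) (p q : 𝒳 → ℝ) (x : 𝒳) : ℝ :=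
  Real.log ((1 + α) * q x / (α * p x + q x))

/-- `Cov_{t₁,t₂}(P^{M₁}, Q^{M₂}, α)`. -/
def covTT {𝒳 : Type*} [Fintype 𝒳] (α : ℝ) {M₁ M₂ K : ℕ} (t₁ t₂ : Matching M₁ M₂ K)
    (P : Fin M₁ → 𝒳 → ℝ) (Q : Fin M₂ → 𝒳 → ℝ) : ℝ :=
  (∑ p ∈ t₁.pairs, ∑ q ∈ t₂.pairs.filter (fun q => q.1 = p.1),
      α * covUnder (P p.1) (idens1 α (P p.1) (Q p.2)) (idens1 α (P q.1) (Q q.2)))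
    + ∑ p ∈ t₁.pairs, ∑ q ∈ t₂.pairs.filter (fun q => q.2 = p.2),
        covUnder (Q p.2) (idens2 α (P p.1) (Q p.2)) (idens2 α (P q.1) (Q q.2))

/-- The multivariate Gaussian cumulative distribution function, with mean `μ` and
covariance matrix `S`, evaluated at `x`. -/
def gaussCdf {ι : Type*} [Fintype ι] (x μ : ι → ℝ) (S : Matrix ι ι ℝ) : ℝ :=
  ∫ y in { y : ι → ℝ | ∀ i, y i ≤ x i },
    (Real.sqrt ((2 * Real.pi) ^ Fintype.card ι * S.det))⁻¹ *
      Real.exp (-(1 / 2) * dotProduct (y - μ) (S⁻¹.mulVec (y - μ)))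

/-- `ν* = inf { L : Φ(L·𝟏; 𝟎; V) ≥ 1 - ε }`. -/
def nuStar {ι : Type*} [Fintype ι] (ε : ℝ) (V : Matrix ι ι ℝ) : ℝ :=
  sInf { L : ℝ | 1 - ε ≤ gaussCdf (fun _ => L) (fun _ => 0) V }

/-- `β*_SD(n,N,ε | P^{M₁}, Q^{M₂})`: the optimal universal mismatch probability subject
to false reject probability at most `ε`. -/
def betaSDopt {𝒳 : Type*} [Fintype 𝒳] {M₁ M₂ : ℕ} (K N n : ℕ)
    (P : Fin M₁ → 𝒳 → ℝ) (Q : Fin M₂ → 𝒳 → ℝ) (ε : ℝ) : ℝ :=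
  sInf { b : ℝ | ∃ φ : Sample 𝒳 M₁ M₂ N n → Option (Matching M₁ M₂ K),
    rejectProb P Q φ ≤ ε ∧
    b = sSup { m : ℝ | ∃ (l' : Matching M₁ M₂ K) (P' : Fin M₁ → 𝒳 → ℝ)
        (Q' : Fin M₂ → 𝒳 → ℝ), MemPK l' P' Q' ∧ m = mismatchProb P' Q' l' φ } }

end

noncomputable section Statement15Aux

open Finset

variable {𝒳 : Type*} [Fintype 𝒳] [DecidableEq 𝒳]

private lemma s15_sum_fn_prod {ι β : Type*} [Fintype ι] [DecidableEq ι] [Fintype β]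
    (f : ι → β → ℝ) : ∑ u : ι → β, ∏ i, f i (u i) = ∏ i, ∑ b, f i b :=
  (Fintype.prod_sum f).symm

/-- number of occurrences of `a` in `x` -/
private def s15cnt {𝒳 : Type*} [Fintype 𝒳] [DecidableEq 𝒳] {m : ℕ}
    (x : Fin m → 𝒳) (a : 𝒳) : ℕ :=
  (Finset.univ.filter fun k => x k = a).card

private lemma s15_empDist_eq {m : ℕ} (x : Fin m → 𝒳) (a : 𝒳) :
    empDist x a = (s15cnt x a : ℝ) / m := rfl

private lemma s15_prod_comp {m : ℕ} (x : Fin m → 𝒳) (h : 𝒳 → ℝ) :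
    ∏ k, h (x k) = ∏ a, h a ^ s15cnt x a := by
  rw [← Finset.prod_fiberwise univ (fun k => x k) (fun k => h (x k))]
  refine Finset.prod_congr rfl fun a _ => ?_
  rw [Finset.prod_congr rfl (fun k hk => by rw [(Finset.mem_filter.mp hk).2]),
    Finset.prod_const]
  rfl

private lemma s15_sum_cnt {m : ℕ} (x : Fin m → 𝒳) : ∑ a, s15cnt x a = m := by
  classical
  have := Finset.card_eq_sum_card_fiberwise
    (f := x) (s := (univ : Finset (Fin m))) (t := (univ : Finset 𝒳))
    (fun k _ => Finset.mem_univ _)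
  simpa [s15cnt] using this.symm

private lemma s15_empDist_isDist {m : ℕ} (hm : 1 ≤ m) (x : Fin m → 𝒳) :
    IsDist (empDist x) := by
  constructor
  · intro a
    have : (0:ℝ) ≤ (s15cnt x a : ℝ) / m := by positivity
    simpa [s15_empDist_eq] using this
  · have hm0 : (m : ℝ) ≠ 0 := by positivity
    have : ∑ a, empDist x a = (∑ a, (s15cnt x a : ℝ)) / m := by
      simp [s15_empDist_eq, Finset.sum_div]
    rw [this]
    have : (∑ a, (s15cnt x a : ℝ)) = (m : ℝ) := by
      rw [← Nat.cast_sum, s15_sum_cnt]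
    rw [this, div_self hm0]

private lemma s15_dist_le_one {p : 𝒳 → ℝ} (hp : IsDist p) (a : 𝒳) : p a ≤ 1 := by
  rw [← hp.2]
  exact Finset.single_le_sum (fun b _ => hp.1 b) (Finset.mem_univ a)

/-- per-term lower bound `p x log (p x / q x) ≥ p x log (p x)` when `q x ≤ 1`. -/
private lemma s15_term_lb {px qx : ℝ} (hpx0 : 0 ≤ px) (hpx1 : px ≤ 1)
    (hqx0 : 0 ≤ qx) (hqx1 : qx ≤ 1) :
    px * Real.log px ≤ px * Real.log (px / qx) := by
  rcases eq_or_lt_of_le hpx0 with h0 | hpos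
  · simp [← h0]
  rcases eq_or_lt_of_le hqx0 with hq0 | hqpos
  · rw [← hq0, div_zero, Real.log_zero, mul_zero]
    exact mul_nonpos_of_nonneg_of_nonpos hpx0 (Real.log_nonpos hpx0 hpx1)
  · apply mul_le_mul_of_nonneg_left _ hpx0
    rw [Real.log_div (ne_of_gt hpos) (ne_of_gt hqpos)]
    have : Real.log qx ≤ 0 := Real.log_nonpos hqx0 hqx1
    linarith

private lemma s15_xlogx_lb {t : ℝ} (ht : 0 ≤ t) : (-1 : ℝ) ≤ t * Real.log t := by
  rcases eq_or_lt_of_le ht with h0 | hpos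
  · simp [← h0]
  · have h := Real.log_le_sub_one_of_pos (show (0:ℝ) < t⁻¹ by positivity)
    rw [Real.log_inv] at h
    nlinarith [mul_le_mul_of_nonneg_left h (le_of_lt hpos),
      mul_inv_cancel₀ (ne_of_gt hpos)]

private lemma s15_kl_lb {p q : 𝒳 → ℝ} (hp : IsDist p) (hq : IsDist q) :
    -(Fintype.card 𝒳 : ℝ) ≤ KL p q := by
  have : ∀ a : 𝒳, (-1 : ℝ) ≤ p a * Real.log (p a / q a) := fun a =>
    le_trans (s15_xlogx_lb (hp.1 a))
      (s15_term_lb (hp.1 a) (s15_dist_le_one hp a) (hq.1 a) (s15_dist_le_one hq a))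
  calc -(Fintype.card 𝒳 : ℝ) = ∑ _a : 𝒳, (-1 : ℝ) := by
        simp
    _ ≤ ∑ a, p a * Real.log (p a / q a) :=
        Finset.sum_le_sum fun a _ => this a
    _ = KL p q := rfl

/-- nonnegativity of KL against a subprobability dominating the support -/
private lemma s15_kl_nonneg {p q : 𝒳 → ℝ} (hp : IsDist p) (hq0 : ∀ a, 0 ≤ q a)
    (hq1 : ∑ a, q a = 1) (hsupp : ∀ a, 0 < p a → 0 < q a) : 0 ≤ KL p q := by
  have key : ∀ a : 𝒳, p a - q a ≤ p a * Real.log (p a / q a) := by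
    intro a
    rcases eq_or_lt_of_le (hp.1 a) with h0 | hpos
    · rw [← h0]
      simpa using hq0 a
    · have hqpos := hsupp a hpos
      have h := Real.log_le_sub_one_of_pos (show 0 < q a / p a by positivity)
      have h2 : 1 - q a / p a ≤ Real.log (p a / q a) := by
        rw [show p a / q a = (q a / p a)⁻¹ by rw [inv_div], Real.log_inv]
        linarith
      have := mul_le_mul_of_nonneg_left h2 (le_of_lt hpos)
      calc p a - q a = p a * (1 - q a / p a) := by
            field_simp
        _ ≤ p a * Real.log (p a / q a) := this
  calc (0:ℝ) = ∑ a, p a - ∑ a, q a := by rw [hp.2, hq1]; ring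
    _ = ∑ a, (p a - q a) := by rw [Finset.sum_sub_distrib]
    _ ≤ ∑ a, p a * Real.log (p a / q a) := Finset.sum_le_sum fun a _ => key a
    _ = KL p q := rfl

private lemma s15_gjs_nonneg {α : ℝ} (hα : 0 < α) {p q : 𝒳 → ℝ}
    (hp : IsDist p) (hq : IsDist q) : 0 ≤ GJS α p q := by
  have hmix0 : ∀ a, 0 ≤ mix α p q a := by
    intro a
    have := hp.1 a; have := hq.1 a
    unfold mix
    positivity
  have hmix1 : ∑ a, mix α p q a = 1 := by
    unfold mix
    rw [← Finset.sum_div, Finset.sum_add_distrib, ← Finset.mul_sum, hp.2, hq.2]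
    field_simp
    ring
  have h1 : 0 ≤ KL p (mix α p q) := by
    refine s15_kl_nonneg hp hmix0 hmix1 fun a hpa => ?_
    unfold mix
    have := hq.1 a
    positivity
  have h2 : 0 ≤ KL q (mix α p q) := by
    refine s15_kl_nonneg hq hmix0 hmix1 fun a hqa => ?_
    unfold mix
    have := hp.1 a
    have : 0 ≤ α * p a := by positivity
    positivity
  unfold GJS
  positivity

/-- the sequence-probability bound via the type of the sequence -/
private lemma s15_seq_prob_le {m : ℕ} (hm : 1 ≤ m) (Pd : 𝒳 → ℝ)
    (hPd : ∀ a, 0 ≤ Pd a) (x : Fin m → 𝒳) :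
    ∏ k, Pd (x k) ≤
      Real.exp (-(m:ℝ) * KL (empDist x) Pd) * ∏ k, empDist x (x k) := by
  have hm0 : (m : ℝ) ≠ 0 := by positivity
  have hcnt : ∀ a, (m : ℝ) * empDist x a = (s15cnt x a : ℝ) := by
    intro a; rw [s15_empDist_eq]; field_simp
  have hexp : -(m:ℝ) * KL (empDist x) Pd
      = ∑ a, (-(s15cnt x a : ℝ)) * Real.log (empDist x a / Pd a) := by
    unfold KL
    rw [Finset.mul_sum]
    refine Finset.sum_congr rfl fun a _ => ?_
    rw [← hcnt a]; ring
  rw [hexp, Real.exp_sum, s15_prod_comp x Pd, s15_prod_comp x (empDist x),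
    ← Finset.prod_mul_distrib]
  by_cases hz : ∃ a, 0 < s15cnt x a ∧ Pd a = 0
  · obtain ⟨a, hca, hPa⟩ := hz
    have hL : ∏ a, Pd a ^ s15cnt x a = 0 :=
      Finset.prod_eq_zero (Finset.mem_univ a)
        (by rw [hPa, zero_pow (Nat.pos_iff_ne_zero.mp hca)])
    rw [hL]
    refine Finset.prod_nonneg fun b _ => mul_nonneg (Real.exp_nonneg _) ?_
    exact pow_nonneg (by rw [s15_empDist_eq]; positivity) _
  · push_neg at hz
    refine le_of_eq (Finset.prod_congr rfl fun a _ => ?_)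
    rcases Nat.eq_zero_or_pos (s15cnt x a) with h0 | hpos
    · simp [h0]
    · have hPa : 0 < Pd a := lt_of_le_of_ne (hPd a) (Ne.symm (hz a hpos))
      have hΩ : 0 < empDist x a := by
        rw [s15_empDist_eq]
        have : 0 < (s15cnt x a : ℝ) := by exact_mod_cast hpos
        positivity
      have hlog : -(s15cnt x a : ℝ) * Real.log (empDist x a / Pd a)
          = (s15cnt x a : ℝ) * Real.log (Pd a / empDist x a) := by
        rw [Real.log_div hΩ.ne' hPa.ne', Real.log_div hPa.ne' hΩ.ne']; ring
      rw [hlog, Real.exp_nat_mul, Real.exp_log (by positivity), div_pow,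
        div_mul_cancel₀]
      exact pow_ne_zero _ hΩ.ne'

private lemma s15_sum_prod_dist {m : ℕ} {q : 𝒳 → ℝ} (hq : IsDist q) :
    ∑ x : Fin m → 𝒳, ∏ k, q (x k) = 1 := by
  rw [s15_sum_fn_prod (fun (_ : Fin m) a => q a)]
  simp [hq.2]

/-- the number-of-types bound -/
private lemma s15_type_count {m : ℕ} (hm : 1 ≤ m) :
    ∑ x : Fin m → 𝒳, ∏ k, empDist x (x k) ≤ ((m:ℝ) + 1) ^ (Fintype.card 𝒳) := by
  classical
  set g : (Fin m → 𝒳) → (𝒳 → Fin (m + 1)) := fun x a =>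
    ⟨s15cnt x a, Nat.lt_succ_of_le (le_trans (Finset.card_filter_le _ _)
      (by simp))⟩ with hg
  have hfib := Finset.sum_fiberwise (univ : Finset (Fin m → 𝒳)) g
    (fun x => ∏ k, empDist x (x k))
  rw [← hfib]
  have hbound : ∀ b : 𝒳 → Fin (m + 1),
      ∑ x ∈ univ.filter fun x => g x = b, ∏ k, empDist x (x k) ≤ 1 := by
    intro b
    rcases Finset.eq_empty_or_nonempty (univ.filter fun x => g x = b) with he | ⟨x₀, hx₀⟩
    · rw [he]; simp
    · have hemp : ∀ x ∈ univ.filter fun x => g x = b, empDist x = empDist x₀ := by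
        intro x hx
        have hgx : g x = g x₀ := by
          rw [(Finset.mem_filter.mp hx).2, (Finset.mem_filter.mp hx₀).2]
        funext a
        have : s15cnt x a = s15cnt x₀ a := by
          have := congrFun hgx a
          simpa [hg, Fin.mk.injEq] using this
        rw [s15_empDist_eq, s15_empDist_eq, this]
      calc ∑ x ∈ univ.filter fun x => g x = b, ∏ k, empDist x (x k)
          = ∑ x ∈ univ.filter fun x => g x = b, ∏ k, empDist x₀ (x k) :=
            Finset.sum_congr rfl fun x hx => by rw [hemp x hx]
        _ ≤ ∑ x : Fin m → 𝒳, ∏ k, empDist x₀ (x k) :=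
            Finset.sum_le_sum_of_subset_of_nonneg (Finset.filter_subset _ _)
              (fun x _ _ => Finset.prod_nonneg fun k _ =>
                (s15_empDist_isDist hm x₀).1 _)
        _ = 1 := s15_sum_prod_dist (s15_empDist_isDist hm x₀)
  calc ∑ b : 𝒳 → Fin (m + 1), ∑ x ∈ univ.filter fun x => g x = b,
        ∏ k, empDist x (x k)
      ≤ ∑ _b : 𝒳 → Fin (m + 1), (1:ℝ) := Finset.sum_le_sum fun b _ => hbound b
    _ = ((m:ℝ) + 1) ^ (Fintype.card 𝒳) := by
        rw [Finset.sum_const, Finset.card_univ, Fintype.card_fun, Fintype.card_fin,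
          nsmul_eq_mul, mul_one]
        push_cast
        ring

/-- marginalization of a product density against a one-coordinate observable -/
private lemma s15_marg {ι β : Type*} [Fintype ι] [DecidableEq ι] [Fintype β]
    (f : ι → β → ℝ) (hf : ∀ i, ∑ b, f i b = 1) (i₀ : ι) (H : β → ℝ) :
    ∑ u : ι → β, (∏ i, f i (u i)) * H (u i₀) = ∑ b, f i₀ b * H b := by
  classical
  set g : ι → β → ℝ := Function.update f i₀ (fun b => f i₀ b * H b) with hgdef
  have key : ∀ u : ι → β, (∏ i, f i (u i)) * H (u i₀) = ∏ i, g i (u i) := by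
    intro u
    have h1 : ∏ i, f i (u i) = (∏ i ∈ univ.erase i₀, f i (u i)) * f i₀ (u i₀) :=
      (Finset.prod_erase_mul _ _ (Finset.mem_univ _)).symm
    have h2 : ∏ i, g i (u i) = (∏ i ∈ univ.erase i₀, g i (u i)) * g i₀ (u i₀) :=
      (Finset.prod_erase_mul _ _ (Finset.mem_univ _)).symm
    have h3 : ∏ i ∈ univ.erase i₀, g i (u i) = ∏ i ∈ univ.erase i₀, f i (u i) :=
      Finset.prod_congr rfl fun i hi => by
        rw [hgdef, Function.update_of_ne (Finset.ne_of_mem_erase hi)]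
    have h4 : g i₀ (u i₀) = f i₀ (u i₀) * H (u i₀) := by
      rw [hgdef, Function.update_self]
    rw [h1, h2, h3, h4]; ring
  simp_rw [key]
  rw [s15_sum_fn_prod]
  have h2 : ∏ i, ∑ b, g i b = (∏ i ∈ univ.erase i₀, ∑ b, g i b) * ∑ b, g i₀ b :=
    (Finset.prod_erase_mul _ _ (Finset.mem_univ _)).symm
  rw [h2]
  have h3 : ∏ i ∈ univ.erase i₀, ∑ b, g i b = 1 := by
    refine Finset.prod_eq_one fun i hi => ?_
    have : ∑ b, g i b = ∑ b, f i b := Finset.sum_congr rfl fun b _ => by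
      rw [hgdef, Function.update_of_ne (Finset.ne_of_mem_erase hi)]
    rw [this, hf i]
  rw [h3, one_mul]
  refine Finset.sum_congr rfl fun b _ => ?_
  rw [hgdef, Function.update_self]

/-- marginalization of `Pr` to a single pair of sequences -/
private lemma s15_pr_pair {M₁ M₂ N n : ℕ} (P : Fin M₁ → 𝒳 → ℝ)
    (Q : Fin M₂ → 𝒳 → ℝ) (hP : IsDistVec P) (hQ : IsDistVec Q)
    (i₀ : Fin M₁) (j₀ : Fin M₂) (C : (Fin N → 𝒳) → (Fin n → 𝒳) → Prop) :
    Pr P Q {ω : Sample 𝒳 M₁ M₂ N n | C (ω.1 i₀) (ω.2 j₀)} =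
      ∑ x : Fin N → 𝒳, ∑ y : Fin n → 𝒳,
        (∏ k, P i₀ (x k)) * ((∏ k, Q j₀ (y k)) * (if C x y then (1:ℝ) else 0)) := by
  classical
  have hsumP : ∀ i, ∑ x : Fin N → 𝒳, ∏ k, P i (x k) = 1 :=
    fun i => s15_sum_prod_dist (hP i)
  have hsumQ : ∀ j, ∑ y : Fin n → 𝒳, ∏ k, Q j (y k) = 1 :=
    fun j => s15_sum_prod_dist (hQ j)
  unfold Pr
  rw [Fintype.sum_prod_type]
  have hind : ∀ u v, Set.indicator {ω : Sample 𝒳 M₁ M₂ N n | C (ω.1 i₀) (ω.2 j₀)}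
      (dens P Q) (u, v)
      = (∏ i, ∏ k, P i (u i k)) * (∏ j, ∏ k, Q j (v j k))
          * (if C (u i₀) (v j₀) then (1:ℝ) else 0) := by
    intro u v
    rw [Set.indicator_apply]
    by_cases h : C (u i₀) (v j₀) <;> simp [h, _root_.dens, Set.mem_setOf_eq]
  simp_rw [hind]
  have step1 : ∀ u : Fin M₁ → Fin N → 𝒳,
      ∑ v : Fin M₂ → Fin n → 𝒳, (∏ i, ∏ k, P i (u i k)) * (∏ j, ∏ k, Q j (v j k))
          * (if C (u i₀) (v j₀) then (1:ℝ) else 0)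
      = (∏ i, ∏ k, P i (u i k)) *
          ∑ y : Fin n → 𝒳, (∏ k, Q j₀ (y k)) * (if C (u i₀) y then (1:ℝ) else 0) := by
    intro u
    rw [Finset.mul_sum]
    have := s15_marg (fun j (y : Fin n → 𝒳) => ∏ k, Q j (y k)) hsumQ j₀
      (fun y => (∏ i, ∏ k, P i (u i k)) * (if C (u i₀) y then (1:ℝ) else 0))
    calc ∑ v : Fin M₂ → Fin n → 𝒳, (∏ i, ∏ k, P i (u i k)) * (∏ j, ∏ k, Q j (v j k))
          * (if C (u i₀) (v j₀) then (1:ℝ) else 0)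
        = ∑ v : Fin M₂ → Fin n → 𝒳, (∏ j, ∏ k, Q j (v j k)) *
            ((∏ i, ∏ k, P i (u i k)) * (if C (u i₀) (v j₀) then (1:ℝ) else 0)) := by
          refine Finset.sum_congr rfl fun v _ => by ring
      _ = ∑ y : Fin n → 𝒳, (∏ k, Q j₀ (y k)) *
            ((∏ i, ∏ k, P i (u i k)) * (if C (u i₀) y then (1:ℝ) else 0)) := this
      _ = _ := Finset.sum_congr rfl fun y _ => by ring
  simp_rw [step1]
  have step2 := s15_marg (fun i (x : Fin N → 𝒳) => ∏ k, P i (x k)) hsumP i₀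
    (fun x => ∑ y : Fin n → 𝒳, (∏ k, Q j₀ (y k)) * (if C x y then (1:ℝ) else 0))
  rw [step2]
  exact Finset.sum_congr rfl fun x _ => by rw [Finset.mul_sum]

private lemma s15_pr_mono {M₁ M₂ N n : ℕ} {P : Fin M₁ → 𝒳 → ℝ} {Q : Fin M₂ → 𝒳 → ℝ}
    (hdens : ∀ ω : Sample 𝒳 M₁ M₂ N n, 0 ≤ dens P Q ω)
    {S S' : Set (Sample 𝒳 M₁ M₂ N n)} (h : S ⊆ S') : Pr P Q S ≤ Pr P Q S' := by
  unfold Pr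
  exact Finset.sum_le_sum fun ω _ => Set.indicator_le_indicator_of_subset h hdens ω

private lemma s15_union {M₁ M₂ N n : ℕ} {P : Fin M₁ → 𝒳 → ℝ} {Q : Fin M₂ → 𝒳 → ℝ}
    (hdens : ∀ ω : Sample 𝒳 M₁ M₂ N n, 0 ≤ dens P Q ω)
    {ι : Type*} [Fintype ι] (E : ι → Set (Sample 𝒳 M₁ M₂ N n)) :
    Pr P Q {ω | ∃ i, ω ∈ E i} ≤ ∑ i, Pr P Q (E i) := by
  unfold Pr
  rw [Finset.sum_comm]
  refine Finset.sum_le_sum fun ω _ => ?_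
  by_cases hω : ω ∈ {ω : Sample 𝒳 M₁ M₂ N n | ∃ i, ω ∈ E i}
  · rw [Set.indicator_of_mem hω]
    obtain ⟨i, hi⟩ := hω
    calc dens P Q ω = (E i).indicator (dens P Q) ω :=
          (Set.indicator_of_mem hi _).symm
      _ ≤ ∑ i, (E i).indicator (dens P Q) ω :=
          Finset.single_le_sum
            (fun i _ => Set.indicator_nonneg (fun ω' _ => hdens ω') ω)
            (Finset.mem_univ i)
  · rw [Set.indicator_of_notMem hω]
    exact Finset.sum_nonneg fun i _ =>
      Set.indicator_nonneg (fun ω' _ => hdens ω') ω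

/-- a canonical `K`-matching when `K ≤ M₂ ≤ M₁` -/
private def s15_stdMatching {M₁ M₂ K : ℕ} (h1 : K ≤ M₁) (h2 : K ≤ M₂) :
    Matching M₁ M₂ K where
  pairs := (Finset.univ : Finset (Fin K)).image
    (fun k => (Fin.castLE h1 k, Fin.castLE h2 k))
  card_pairs := by
    rw [Finset.card_image_of_injective _ (fun a b hab => by
      have := congrArg Prod.fst hab
      exact Fin.castLE_injective h1 this)]
    simp
  left_inj := by
    intro p hp q hq hpq
    obtain ⟨a, _, rfl⟩ := Finset.mem_image.mp hp
    obtain ⟨b, _, rfl⟩ := Finset.mem_image.mp hq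
    have : a = b := Fin.castLE_injective h1 hpq
    rw [this]
  right_inj := by
    intro p hp q hq hpq
    obtain ⟨a, _, rfl⟩ := Finset.mem_image.mp hp
    obtain ⟨b, _, rfl⟩ := Finset.mem_image.mp hq
    have : a = b := Fin.castLE_injective h2 hpq
    rw [this]

end Statement15Aux

/-- non-asymptotic false alarm bound for the two-phase test of
Algorithm 2 under the null hypothesis:
`η(φ^M|P^{M₁},Q^{M₂}) ≤ ξ(M₂,N,n)·exp(-n f₀(λ_{1,n},P^{M₁},Q^{M₂}))`. -/
theorem statement15 {𝒳 : Type*} [Fintype 𝒳] [DecidableEq 𝒳]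
    {M₁ M₂ : ℕ} (hM₂ : 1 ≤ M₂) (hM : M₂ ≤ M₁)
    (α lam₁ lam₂ : ℝ) (hα : 0 < α) (h1 : 0 ≤ lam₁) (h2 : 0 ≤ lam₂)
    (n N : ℕ) (hn : 1 ≤ n) (hN : (N : ℝ) = α * n)
    (P : Fin M₁ → 𝒳 → ℝ) (Q : Fin M₂ → 𝒳 → ℝ) (hPQ : MemP0 P Q)
    (φ : Sample 𝒳 M₁ M₂ N n → Option (Σ K' : ℕ, Matching M₁ M₂ K'))
    (hφ : IsTwoPhaseTest α lam₁ lam₂ φ) :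
    alarmProb P Q φ ≤
      xiFactor M₁ M₂ (Fintype.card 𝒳) N n *
        Real.exp (-(n : ℝ) * f0 α (unnTh lam₁ α M₂ (Fintype.card 𝒳) n) P Q) := by
  classical
  obtain ⟨hP, hQ, _hne⟩ := hPQ
  set c := Fintype.card 𝒳 with hc
  set lam := unnTh lam₁ α M₂ c n with hlam
  set F0 := f0 α lam P Q with hF0
  have hn0 : (0:ℝ) < n := by exact_mod_cast hn
  have hNpos : (0:ℝ) < N := by rw [hN]; positivity
  have hN1 : 1 ≤ N := by
    rcases Nat.eq_zero_or_pos N with h | h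
    · rw [h] at hNpos; norm_num at hNpos
    · exact h
  have dens_nn : ∀ ω : Sample 𝒳 M₁ M₂ N n, 0 ≤ dens P Q ω := by
    intro ω
    exact mul_nonneg
      (Finset.prod_nonneg fun i _ => Finset.prod_nonneg fun k _ => (hP i).1 _)
      (Finset.prod_nonneg fun j _ => Finset.prod_nonneg fun k _ => (hQ j).1 _)
  -- lower-bounding tool for `f0`
  have hbdd : BddBelow {v : ℝ | ∃ (i : Fin M₁) (j : Fin M₂), ∃ Ω Ψ : 𝒳 → ℝ,
      IsDist Ω ∧ IsDist Ψ ∧ GJS α Ω Ψ ≤ lam ∧ v = α * KL Ω (P i) + KL Ψ (Q j)} := by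
    refine ⟨α * (-(c:ℝ)) + (-(c:ℝ)), ?_⟩
    rintro v ⟨i, j, Ω, Ψ, hΩ, hΨ, -, rfl⟩
    have h1 := s15_kl_lb hΩ (hP i)
    have h2 := s15_kl_lb hΨ (hQ j)
    have h3 := mul_le_mul_of_nonneg_left h1 (le_of_lt hα)
    simp only [hc]
    linarith
  have f0_le : ∀ (i : Fin M₁) (j : Fin M₂) (Ω Ψ : 𝒳 → ℝ), IsDist Ω → IsDist Ψ →
      GJS α Ω Ψ ≤ lam → F0 ≤ α * KL Ω (P i) + KL Ψ (Q j) := by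
    intro i j Ω Ψ hΩ hΨ hg
    rw [hF0]
    unfold f0
    exact csInf_le hbdd ⟨i, j, Ω, Ψ, hΩ, hΨ, hg, rfl⟩
  -- the per-pair core bound
  have core : ∀ (i : Fin M₁) (j : Fin M₂),
      Pr P Q {ω : Sample 𝒳 M₁ M₂ N n |
          GJS α (empDist (ω.1 i)) (empDist (ω.2 j)) ≤ lam}
        ≤ (((N:ℝ)+1)^c * ((n:ℝ)+1)^c) * Real.exp (-(n:ℝ) * F0) := by
    intro i j
    rw [s15_pr_pair P Q hP hQ i j (fun x y => GJS α (empDist x) (empDist y) ≤ lam)]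
    have pt : ∀ (x : Fin N → 𝒳) (y : Fin n → 𝒳),
        (∏ k, P i (x k)) * ((∏ k, Q j (y k)) *
            (if GJS α (empDist x) (empDist y) ≤ lam then (1:ℝ) else 0))
          ≤ Real.exp (-(n:ℝ) * F0) *
            ((∏ k, empDist x (x k)) * (∏ k, empDist y (y k))) := by
      intro x y
      have hAnn : (0:ℝ) ≤ ∏ k, empDist x (x k) :=
        Finset.prod_nonneg fun k _ => (s15_empDist_isDist hN1 x).1 _
      have hBnn : (0:ℝ) ≤ ∏ k, empDist y (y k) :=
        Finset.prod_nonneg fun k _ => (s15_empDist_isDist hn y).1 _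
      by_cases hC : GJS α (empDist x) (empDist y) ≤ lam
      · rw [if_pos hC, mul_one]
        have hx := s15_seq_prob_le hN1 (P i) (hP i).1 x
        have hy := s15_seq_prob_le hn (Q j) (hQ j).1 y
        have hxnn : (0:ℝ) ≤ ∏ k, P i (x k) :=
          Finset.prod_nonneg fun k _ => (hP i).1 _
        have hynn : (0:ℝ) ≤ ∏ k, Q j (y k) :=
          Finset.prod_nonneg fun k _ => (hQ j).1 _
        have hmul := mul_le_mul hx hy hynn
          (mul_nonneg (Real.exp_nonneg _) hAnn)
        refine le_trans hmul ?_
        have heq : (Real.exp (-(N:ℝ) * KL (empDist x) (P i)) * ∏ k, empDist x (x k))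
              * (Real.exp (-(n:ℝ) * KL (empDist y) (Q j)) * ∏ k, empDist y (y k))
            = Real.exp (-(N:ℝ) * KL (empDist x) (P i) + -(n:ℝ) * KL (empDist y) (Q j))
              * ((∏ k, empDist x (x k)) * (∏ k, empDist y (y k))) := by
          rw [Real.exp_add]; ring
        rw [heq]
        refine mul_le_mul_of_nonneg_right ?_ (mul_nonneg hAnn hBnn)
        refine Real.exp_le_exp.mpr ?_
        have hfeas := f0_le i j _ _ (s15_empDist_isDist hN1 x)
          (s15_empDist_isDist hn y) hC
        have hmulf := mul_le_mul_of_nonneg_left hfeas (le_of_lt hn0)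
        rw [hN]
        nlinarith [hmulf]
      · rw [if_neg hC, mul_zero, mul_zero]
        exact mul_nonneg (Real.exp_nonneg _) (mul_nonneg hAnn hBnn)
    calc ∑ x : Fin N → 𝒳, ∑ y : Fin n → 𝒳,
          (∏ k, P i (x k)) * ((∏ k, Q j (y k)) *
            (if GJS α (empDist x) (empDist y) ≤ lam then (1:ℝ) else 0))
        ≤ ∑ x : Fin N → 𝒳, ∑ y : Fin n → 𝒳, Real.exp (-(n:ℝ) * F0) *
            ((∏ k, empDist x (x k)) * (∏ k, empDist y (y k))) :=
          Finset.sum_le_sum fun x _ => Finset.sum_le_sum fun y _ => pt x y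
      _ = Real.exp (-(n:ℝ) * F0) *
            ((∑ x : Fin N → 𝒳, ∏ k, empDist x (x k)) *
              (∑ y : Fin n → 𝒳, ∏ k, empDist y (y k))) := by
          rw [Finset.sum_mul_sum, Finset.mul_sum]
          exact Finset.sum_congr rfl fun x _ => by rw [Finset.mul_sum]
      _ ≤ Real.exp (-(n:ℝ) * F0) * ((((N:ℝ)+1)^c) * (((n:ℝ)+1)^c)) := by
          refine mul_le_mul_of_nonneg_left ?_ (Real.exp_nonneg _)
          refine mul_le_mul (s15_type_count hN1) (s15_type_count hn)
            (Finset.sum_nonneg fun y _ => Finset.prod_nonneg fun k _ =>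
              (s15_empDist_isDist hn y).1 _) (by positivity)
      _ = (((N:ℝ)+1)^c * ((n:ℝ)+1)^c) * Real.exp (-(n:ℝ) * F0) := by ring
  -- threshold monotonicity
  have hlog : (0:ℝ) ≤ Real.log ((1 + α) * n + 1) := by
    refine Real.log_nonneg ?_
    nlinarith [hn0, hα]
  have lam_mono : ∀ Khat, Khat ≤ M₂ → unnTh lam₁ α Khat c n ≤ lam := by
    intro Khat hK
    rw [hlam]
    unfold unnTh
    have hcast : ((Khat * c : ℕ):ℝ) ≤ ((M₂ * c : ℕ):ℝ) := by
      exact_mod_cast Nat.mul_le_mul_right c hK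
    have hmm := mul_le_mul_of_nonneg_right hcast hlog
    have hdiv : ((Khat * c : ℕ):ℝ) * Real.log ((1 + α) * n + 1) / n
        ≤ ((M₂ * c : ℕ):ℝ) * Real.log ((1 + α) * n + 1) / n :=
      div_le_div_of_nonneg_right hmm hn0.le
    linarith
  -- event inclusion: false alarm forces a small GJS score for some pair
  set Ep : Fin M₁ × Fin M₂ → Set (Sample 𝒳 M₁ M₂ N n) := fun p =>
    {ω : Sample 𝒳 M₁ M₂ N n | GJS α (empDist (ω.1 p.1)) (empDist (ω.2 p.2)) ≤ lam}
    with hEp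
  have incl : {ω : Sample 𝒳 M₁ M₂ N n | φ ω ≠ none} ⊆
      {ω : Sample 𝒳 M₁ M₂ N n | ∃ p : Fin M₁ × Fin M₂, ω ∈ Ep p} := by
    intro ω hω
    have hnot : ¬ (∀ Khat, 1 ≤ Khat → Khat ≤ M₂ →
        unnTh lam₁ α Khat c n < minScore α Khat ω) := fun h => hω ((hφ ω).1 h)
    push_neg at hnot
    obtain ⟨Khat, hK1, hKM, hle⟩ := hnot
    have hKM₁ : Khat ≤ M₁ := le_trans hKM hM
    have hnonempty : Nonempty (Matching M₁ M₂ Khat) := ⟨s15_stdMatching hKM₁ hKM⟩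
    set S : Set ℝ := {v : ℝ | ∃ t : Matching M₁ M₂ Khat, v = Sscore α t ω} with hS
    have hSrange : S = Set.range (fun t : Matching M₁ M₂ Khat => Sscore α t ω) := by
      ext v; simp [hS, Set.mem_range, eq_comm]
    have hSfin : S.Finite := by rw [hSrange]; exact Set.finite_range _
    have hSne : S.Nonempty := ⟨Sscore α hnonempty.some ω, hnonempty.some, rfl⟩
    have hmem := hSne.csInf_mem hSfin
    obtain ⟨t, ht⟩ := hmem
    have hts : Sscore α t ω ≤ lam := by
      have h1 : Sscore α t ω = minScore α Khat ω := ht.symm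
      rw [h1]
      exact le_trans hle (lam_mono Khat hKM)
    have hpairs : t.pairs.Nonempty :=
      Finset.card_pos.mp (by rw [t.card_pairs]; omega)
    obtain ⟨⟨i, j⟩, hij⟩ := hpairs
    refine ⟨(i, j), ?_⟩
    have hterm : GJS α (empDist (ω.1 i)) (empDist (ω.2 j)) ≤ Sscore α t ω := by
      have := Finset.single_le_sum
        (f := fun p : Fin M₁ × Fin M₂ =>
          GJS α (empDist (ω.1 p.1)) (empDist (ω.2 p.2)))
        (fun p _ => s15_gjs_nonneg hα (s15_empDist_isDist hN1 (ω.1 p.1))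
          (s15_empDist_isDist hn (ω.2 p.2))) hij
      exact this
    exact le_trans hterm hts
  -- assemble
  have main : alarmProb P Q φ ≤
      ((M₁ * M₂ : ℕ):ℝ) * ((((N:ℝ)+1)^c * ((n:ℝ)+1)^c) * Real.exp (-(n:ℝ) * F0)) := by
    calc alarmProb P Q φ
        ≤ ∑ p : Fin M₁ × Fin M₂, Pr P Q (Ep p) :=
          le_trans (s15_pr_mono dens_nn incl) (s15_union dens_nn Ep)
      _ ≤ ∑ _p : Fin M₁ × Fin M₂,
            (((N:ℝ)+1)^c * ((n:ℝ)+1)^c) * Real.exp (-(n:ℝ) * F0) := by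
          refine Finset.sum_le_sum fun p _ => ?_
          rw [hEp]
          exact core p.1 p.2
      _ = ((M₁ * M₂ : ℕ):ℝ) *
            ((((N:ℝ)+1)^c * ((n:ℝ)+1)^c) * Real.exp (-(n:ℝ) * F0)) := by
          rw [Finset.sum_const, Finset.card_univ, Fintype.card_prod,
            Fintype.card_fin, Fintype.card_fin, nsmul_eq_mul]
  refine le_trans main ?_
  -- final counting arithmetic
  have hM₂pos : 0 < M₂ := hM₂
  have hT : (M₁ * M₂ : ℕ) ≤ Tsum M₁ M₂ * M₂ := by
    have h1 : TK M₁ M₂ 1 ≤ Tsum M₁ M₂ :=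
      Finset.single_le_sum (f := fun K => TK M₁ M₂ K) (fun K _ => Nat.zero_le _)
        (Finset.mem_Icc.mpr ⟨le_refl 1, hM₂⟩)
    have h2 : TK M₁ M₂ 1 = M₁ * M₂ := by
      simp [TK, Nat.choose_one_right, Nat.factorial]
    calc M₁ * M₂ = TK M₁ M₂ 1 := h2.symm
      _ ≤ Tsum M₁ M₂ := h1
      _ ≤ Tsum M₁ M₂ * M₂ := Nat.le_mul_of_pos_right _ hM₂pos
  have hTc : ((M₁ * M₂ : ℕ):ℝ) ≤ ((Tsum M₁ M₂ * M₂ : ℕ):ℝ) := by exact_mod_cast hT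
  have hpow1 : ((N:ℝ)+1)^c ≤ ((N:ℝ)+1)^(M₂*c) :=
    pow_le_pow_right₀ (by linarith [(Nat.cast_nonneg N : (0:ℝ) ≤ N)])
      (Nat.le_mul_of_pos_left c hM₂pos)
  have hpow2 : ((n:ℝ)+1)^c ≤ ((n:ℝ)+1)^(M₂*c) :=
    pow_le_pow_right₀ (by linarith [(Nat.cast_nonneg n : (0:ℝ) ≤ n)])
      (Nat.le_mul_of_pos_left c hM₂pos)
  unfold xiFactor
  have hcoef : ((M₁ * M₂ : ℕ):ℝ) * (((N:ℝ)+1)^c * ((n:ℝ)+1)^c)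
      ≤ ((Tsum M₁ M₂ * M₂ : ℕ):ℝ) * ((N:ℝ)+1)^(M₂*c) * ((n:ℝ)+1)^(M₂*c) := by
    have e1 : ((M₁ * M₂ : ℕ):ℝ) * (((N:ℝ)+1)^c * ((n:ℝ)+1)^c)
        ≤ ((Tsum M₁ M₂ * M₂ : ℕ):ℝ) * (((N:ℝ)+1)^(M₂*c) * ((n:ℝ)+1)^(M₂*c)) := by
      refine mul_le_mul hTc ?_ (by positivity) (by positivity)
      exact mul_le_mul hpow1 hpow2 (by positivity) (by positivity)
    calc ((M₁ * M₂ : ℕ):ℝ) * (((N:ℝ)+1)^c * ((n:ℝ)+1)^c)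
        ≤ ((Tsum M₁ M₂ * M₂ : ℕ):ℝ) * (((N:ℝ)+1)^(M₂*c) * ((n:ℝ)+1)^(M₂*c)) := e1
      _ = ((Tsum M₁ M₂ * M₂ : ℕ):ℝ) * ((N:ℝ)+1)^(M₂*c) * ((n:ℝ)+1)^(M₂*c) := by
          ring
  calc ((M₁ * M₂ : ℕ):ℝ) * ((((N:ℝ)+1)^c * ((n:ℝ)+1)^c) * Real.exp (-(n:ℝ) * F0))
      = (((M₁ * M₂ : ℕ):ℝ) * (((N:ℝ)+1)^c * ((n:ℝ)+1)^c)) * Real.exp (-(n:ℝ) * F0) := by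
        ring
    _ ≤ (((Tsum M₁ M₂ * M₂ : ℕ):ℝ) * ((N:ℝ)+1)^(M₂*c) * ((n:ℝ)+1)^(M₂*c))
          * Real.exp (-(n:ℝ) * F0) :=
        mul_le_mul_of_nonneg_right hcoef (Real.exp_nonneg _)
end

section
/- Let κ = (κ₁,…,κ_{T_K}) ∈ [0,1]^{T_K} satisfy Σ_{i∈[T_K]} κ_i ≤ 1, and set κ₋ := min_{i∈[T_K]} κ_i and κ₊ := Σ_{i∈[T_K]} κ_i. For every test φ there exists a test φ^T that depends on (𝐱^N,𝐲^n) only through the tuple of empirical distributions (types) of the M₁+M₂ sequences, such that for every l ∈ [T_K] and every tuple of generating distributions (P^{M₁},Q^{M₂}) ∈ 𝒫_l^K: β(φ | P^{M₁},Q^{M₂}) ≥ κ₋ · β(φ^T | P^{M₁},Q^{M₂}) and ζ(φ | P^{M₁},Q^{M₂}) ≥ (1 − κ₊) · ζ(φ^T | P^{M₁},Q^{M₂}). -/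
open scoped BigOperators
open scoped Classical

section Aux16

open Finset

variable {𝒳 : Type*} [Fintype 𝒳] [DecidableEq 𝒳]

private lemma prod_eq_of_empDist_eq {m : ℕ} (p : 𝒳 → ℝ) (x x' : Fin m → 𝒳)
    (h : empDist x = empDist x') : ∏ k, p (x k) = ∏ k, p (x' k) := by
  have hcount : ∀ a, (Finset.univ.filter fun k => x k = a).card
      = (Finset.univ.filter fun k => x' k = a).card := by
    intro a
    rcases Nat.eq_zero_or_pos m with hm | hm
    · subst hm
      simp [Finset.eq_empty_of_isEmpty]
    · have hthis := congrFun h a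
      unfold empDist at hthis
      have hm' : (m : ℝ) ≠ 0 := by positivity
      field_simp at hthis
      exact_mod_cast hthis
  have key : ∀ y : Fin m → 𝒳, ∏ k, p (y k)
      = ∏ a, p a ^ (Finset.univ.filter fun k => y k = a).card := by
    intro y
    have hfw := Finset.prod_fiberwise_of_maps_to (s := (Finset.univ : Finset (Fin m)))
      (t := (Finset.univ : Finset 𝒳)) (g := y) (fun k _ => Finset.mem_univ _) (fun k => p (y k))
    rw [← hfw]
    refine Finset.prod_congr rfl fun a _ => ?_
    have hcg : ∀ k ∈ Finset.univ.filter (fun k => y k = a), p (y k) = p a :=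
      fun k hk => by rw [(Finset.mem_filter.1 hk).2]
    rw [Finset.prod_congr rfl hcg, Finset.prod_const]
  rw [key x, key x']
  exact Finset.prod_congr rfl fun a _ => by rw [hcount a]

private lemma Pr_eq_sum {M₁ M₂ N n : ℕ} (P : Fin M₁ → 𝒳 → ℝ) (Q : Fin M₂ → 𝒳 → ℝ)
    (p : Sample 𝒳 M₁ M₂ N n → Prop) [DecidablePred p] :
    Pr P Q {ω | p ω} = ∑ ω ∈ Finset.univ.filter p, dens P Q ω := by
  unfold Pr
  rw [Finset.sum_filter]
  refine Finset.sum_congr rfl fun ω _ => ?_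
  by_cases h : p ω <;> simp [Set.indicator, h]

private lemma core_lemma {Ω T' : Type*} [Fintype Ω] [DecidableEq T'] (τ : Ω → T')
    (d : Ω → ℝ)
    (hd0 : ∀ ω, 0 ≤ d ω) (hdc : ∀ ω ω', τ ω = τ ω' → d ω = d ω')
    (c S : Ω → Prop) [DecidablePred c] [DecidablePred S] (r : ℝ) (hr : 0 ≤ r)
    (hc : ∀ ω ω', τ ω = τ ω' → c ω → c ω')
    (hkey : ∀ ω, c ω → r * ((Finset.univ.filter fun ω' => τ ω' = τ ω).card : ℝ)
        ≤ (((Finset.univ.filter fun ω' => τ ω' = τ ω).filter S).card : ℝ)) :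
    r * ∑ ω ∈ Finset.univ.filter c, d ω ≤ ∑ ω ∈ Finset.univ.filter S, d ω := by
  set V : Finset T' := (Finset.univ.filter c).image τ with hV
  -- rewrite LHS sum fiberwise
  have hL : ∑ ω ∈ Finset.univ.filter c, d ω
      = ∑ v ∈ V, ∑ ω ∈ (Finset.univ.filter c).filter (fun ω => τ ω = v), d ω :=
    (Finset.sum_fiberwise_of_maps_to (fun ω hω => Finset.mem_image_of_mem _ hω) d).symm
  -- for v ∈ V, get a representative
  have hrep : ∀ v ∈ V, ∃ ω₀, c ω₀ ∧ τ ω₀ = v := by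
    intro v hv
    obtain ⟨ω₀, hω₀, hτ⟩ := Finset.mem_image.1 hv
    exact ⟨ω₀, (Finset.mem_filter.1 hω₀).2, hτ⟩
  -- the c-filter restricted to a fiber is the whole fiber
  have hfib : ∀ v ∈ V, (Finset.univ.filter c).filter (fun ω => τ ω = v)
      = Finset.univ.filter (fun ω => τ ω = v) := by
    intro v hv
    obtain ⟨ω₀, hc₀, hτ₀⟩ := hrep v hv
    ext ω
    simp only [Finset.mem_filter, Finset.mem_univ, true_and]
    constructor
    · rintro ⟨_, h⟩; exact h
    · intro h; exact ⟨hc ω₀ ω (by rw [hτ₀, h]) hc₀, h⟩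
  -- RHS lower bound fiberwise
  have hR : ∑ v ∈ V, ∑ ω ∈ (Finset.univ.filter (fun ω => τ ω = v)).filter S, d ω
      ≤ ∑ ω ∈ Finset.univ.filter S, d ω := by
    have h1 : ∑ v ∈ V, ∑ ω ∈ (Finset.univ.filter (fun ω => τ ω = v)).filter S, d ω
        = ∑ v ∈ V, ∑ ω ∈ ((Finset.univ.filter S).filter
            (fun ω => τ ω ∈ V)).filter (fun ω => τ ω = v), d ω := by
      refine Finset.sum_congr rfl fun v hv => ?_
      refine Finset.sum_congr ?_ fun _ _ => rfl
      ext ω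
      simp only [Finset.mem_filter, Finset.mem_univ, true_and]
      constructor
      · rintro ⟨h1, h2⟩; exact ⟨⟨h2, h1 ▸ hv⟩, h1⟩
      · rintro ⟨⟨h2, _⟩, h1⟩; exact ⟨h1, h2⟩
    rw [h1]
    refine le_trans (le_of_eq (Finset.sum_fiberwise_of_maps_to
      (fun ω hω => (Finset.mem_filter.1 hω).2) d)) ?_
    exact Finset.sum_le_sum_of_subset_of_nonneg (Finset.filter_subset _ _)
      (fun ω _ _ => hd0 ω)
  refine le_trans ?_ hR
  rw [hL, Finset.mul_sum]
  refine Finset.sum_le_sum fun v hv => ?_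
  obtain ⟨ω₀, hc₀, hτ₀⟩ := hrep v hv
  rw [hfib v hv]
  have hconst : ∀ ω ∈ Finset.univ.filter (fun ω => τ ω = v), d ω = d ω₀ :=
    fun ω hω => hdc ω ω₀ (by rw [(Finset.mem_filter.1 hω).2, hτ₀])
  have hconst2 : ∀ ω ∈ (Finset.univ.filter (fun ω => τ ω = v)).filter S, d ω = d ω₀ :=
    fun ω hω => hdc ω ω₀ (by
      rw [(Finset.mem_filter.1 (Finset.mem_filter.1 hω).1).2, hτ₀])
  rw [Finset.sum_congr rfl hconst, Finset.sum_congr rfl hconst2,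
    Finset.sum_const, Finset.sum_const, nsmul_eq_mul, nsmul_eq_mul, ← mul_assoc]
  have hkey' := hkey ω₀ hc₀
  rw [hτ₀] at hkey'
  exact mul_le_mul_of_nonneg_right hkey' (hd0 ω₀)

end Aux16

/-- for every test `φ` there is a type-based test `φ^T` (a test factoring
through the empirical distributions of the `M₁+M₂` sequences) with
`β(φ|·) ≥ κ₋ β(φ^T|·)` and `ζ(φ|·) ≥ (1-κ₊) ζ(φ^T|·)` under every hypothesis `H_l` and
every tuple of generating distributions in `𝒫_l^K`. -/
theorem statement16 {𝒳 : Type*} [Fintype 𝒳] [DecidableEq 𝒳]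
    {M₁ M₂ K : ℕ} (hK : 1 ≤ K) (hKM : K ≤ M₂) (hM : M₂ ≤ M₁)
    (n N : ℕ)
    (κ : Matching M₁ M₂ K → ℝ)
    (hκ0 : ∀ t, 0 ≤ κ t) (hκ1 : ∀ t, κ t ≤ 1) (hκs : ∑ t, κ t ≤ 1)
    (φ : Sample 𝒳 M₁ M₂ N n → Option (Matching M₁ M₂ K)) :
    ∃ g : ((Fin M₁ → 𝒳 → ℝ) × (Fin M₂ → 𝒳 → ℝ)) → Option (Matching M₁ M₂ K),
      ∀ (l : Matching M₁ M₂ K) (P : Fin M₁ → 𝒳 → ℝ) (Q : Fin M₂ → 𝒳 → ℝ),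
        MemPK l P Q →
          sInf (Set.range κ) *
              mismatchProb P Q l (typeCompose (N := N) (n := n) g) ≤
            mismatchProb P Q l φ ∧
          (1 - ∑ t, κ t) * rejectProb P Q (typeCompose (N := N) (n := n) g) ≤
            rejectProb P Q φ := by
  classical
  set τ : Sample 𝒳 M₁ M₂ N n → ((Fin M₁ → 𝒳 → ℝ) × (Fin M₂ → 𝒳 → ℝ)) :=
    fun ω => (fun i => empDist (ω.1 i), fun j => empDist (ω.2 j)) with hτdef
  set fib : ((Fin M₁ → 𝒳 → ℝ) × (Fin M₂ → 𝒳 → ℝ)) → Finset (Sample 𝒳 M₁ M₂ N n) :=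
    fun v => Finset.univ.filter fun ω => τ ω = v with hfibdef
  set good : ((Fin M₁ → 𝒳 → ℝ) × (Fin M₂ → 𝒳 → ℝ)) → Matching M₁ M₂ K → Prop :=
    fun v t => κ t * ((fib v).card : ℝ)
      ≤ (((fib v).filter fun ω => φ ω = some t).card : ℝ) with hgooddef
  refine ⟨fun v => if h : ∃ t, good v t then some h.choose else none, ?_⟩
  intro l P Q hPQ
  obtain ⟨hP, hQ, -⟩ := hPQ
  set g : ((Fin M₁ → 𝒳 → ℝ) × (Fin M₂ → 𝒳 → ℝ)) → Option (Matching M₁ M₂ K) :=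
    fun v => if h : ∃ t, good v t then some h.choose else none with hgdef
  have hd0 : ∀ ω : Sample 𝒳 M₁ M₂ N n, 0 ≤ dens P Q ω := by
    intro ω
    unfold dens
    refine mul_nonneg (Finset.prod_nonneg fun i _ => Finset.prod_nonneg
      fun k _ => (hP i).1 _) (Finset.prod_nonneg fun j _ => Finset.prod_nonneg
      fun k _ => (hQ j).1 _)
  have hdc : ∀ ω ω' : Sample 𝒳 M₁ M₂ N n, τ ω = τ ω' → dens P Q ω = dens P Q ω' := by
    intro ω ω' h
    have h1 : ∀ i, empDist (ω.1 i) = empDist (ω'.1 i) :=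
      fun i => congrFun (congrArg Prod.fst h) i
    have h2 : ∀ j, empDist (ω.2 j) = empDist (ω'.2 j) :=
      fun j => congrFun (congrArg Prod.snd h) j
    unfold dens
    congr 1
    · exact Finset.prod_congr rfl fun i _ => prod_eq_of_empDist_eq (P i) _ _ (h1 i)
    · exact Finset.prod_congr rfl fun j _ => prod_eq_of_empDist_eq (Q j) _ _ (h2 j)
  have hcard0 : ∀ v, (0:ℝ) ≤ ((fib v).card : ℝ) := fun v => Nat.cast_nonneg _
  constructor
  · -- mismatch inequality
    have hm1 : mismatchProb P Q l (typeCompose (N := N) (n := n) g)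
        = Pr P Q {ω | g (τ ω) ≠ some l ∧ g (τ ω) ≠ none} := rfl
    have hm2 : mismatchProb P Q l φ = Pr P Q {ω | φ ω ≠ some l ∧ φ ω ≠ none} := rfl
    rw [hm1, hm2, Pr_eq_sum, Pr_eq_sum]
    have hr0 : 0 ≤ sInf (Set.range κ) :=
      Real.sInf_nonneg (by rintro x ⟨t, rfl⟩; exact hκ0 t)
    refine core_lemma τ (dens P Q) hd0 hdc _ _ _ hr0
      (fun ω ω' h hc => by rw [← h]; exact hc) ?_
    intro ω hcω
    obtain ⟨hne, hnn⟩ := hcω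
    have hex : ∃ t, good (τ ω) t := by
      by_contra hno
      exact hnn (by simp [hgdef, hno])
    set t := hex.choose with htdef
    have hgood : good (τ ω) t := hex.choose_spec
    have hgω : g (τ ω) = some t := by simp [hgdef, hex]; rfl
    have htl : t ≠ l := fun h => hne (by rw [hgω, h])
    have hinf_le : sInf (Set.range κ) ≤ κ t :=
      csInf_le ⟨0, by rintro x ⟨s, rfl⟩; exact hκ0 s⟩ ⟨t, rfl⟩
    have hgood' := hgood
    rw [hgooddef] at hgood'
    simp only [Finset.filter_congr_decidable, hfibdef] at hgood' ⊢
    refine le_trans (mul_le_mul_of_nonneg_right hinf_le (Nat.cast_nonneg _))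
      (le_trans hgood' ?_)
    refine Nat.cast_le.2 (Finset.card_le_card ?_)
    intro ω' hω'
    rw [Finset.mem_filter] at hω' ⊢
    refine ⟨hω'.1, ?_, ?_⟩
    · rw [hω'.2]; exact fun h => htl (Option.some_injective _ h)
    · rw [hω'.2]; exact Option.some_ne_none _
  · -- reject inequality
    have hm1 : rejectProb P Q (typeCompose (N := N) (n := n) g)
        = Pr P Q {ω | g (τ ω) = none} := rfl
    have hm2 : rejectProb P Q φ = Pr P Q {ω | φ ω = none} := rfl
    rw [hm1, hm2, Pr_eq_sum, Pr_eq_sum]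
    have hr0 : 0 ≤ 1 - ∑ t, κ t := by linarith
    refine core_lemma τ (dens P Q) hd0 hdc _ _ _ hr0
      (fun ω ω' h hc => by rw [← h]; exact hc) ?_
    intro ω hcω
    have hno : ¬ ∃ t, good (τ ω) t := by
      intro hex
      simp [hgdef, hex] at hcω
    push_neg at hno
    have hlt : ∀ t, (((fib (τ ω)).filter fun ω' => φ ω' = some t).card : ℝ)
        < κ t * ((fib (τ ω)).card : ℝ) := by
      intro t
      have := hno t
      rw [hgooddef] at this
      exact lt_of_not_ge this
    -- partition the fiber by the value of φ
    have hpart : (fib (τ ω)).card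
        = ∑ o : Option (Matching M₁ M₂ K), ((fib (τ ω)).filter fun ω' => φ ω' = o).card :=
      Finset.card_eq_sum_card_fiberwise (fun ω' _ => Finset.mem_univ (φ ω'))
    have hpartR : ((fib (τ ω)).card : ℝ)
        = (((fib (τ ω)).filter fun ω' => φ ω' = none).card : ℝ)
          + ∑ t, (((fib (τ ω)).filter fun ω' => φ ω' = some t).card : ℝ) := by
      rw [hpart]
      push_cast
      rw [Fintype.sum_option]
    have hsum : ∑ t, (((fib (τ ω)).filter fun ω' => φ ω' = some t).card : ℝ)
        ≤ (∑ t, κ t) * ((fib (τ ω)).card : ℝ) := by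
      rw [Finset.sum_mul]
      exact Finset.sum_le_sum fun t _ => le_of_lt (hlt t)
    simp only [Finset.filter_congr_decidable, hfibdef] at hpartR hsum ⊢
    rw [sub_mul, one_mul]
    linarith [hpartR, hsum]
end
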